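/- (Generalized maximum principle.) Let γ∈(0,1), n>2γ, R>0, A∈L^∞(B_R) and a∈L^∞(∂B_R'). Suppose there exists V∈C⁰(closure B_R)∩C²(B_R) with ∇_{x̄}V and x_N^{1−2γ}∂_NV continuous on the closure of B_R, such that −div(x_N^{1−2γ}∇V)+x_N^{1−2γ}AV ≥ 0 in B_R, V>0 on the closure of B_R, and ∂_ν^γV+aV ≥ 0 on ∂B_R'. If U∈C⁰(closure B_R)∩C²(B_R), with ∇_{x̄}U and x_N^{1−2γ}∂_NU continuous on the closure of B_R, satisfies −div(x_N^{1−2γ}∇U)+x_N^{1−2γ}AU ≥ 0 in B_R, ∂_ν^γU+aU ≥ 0 on ∂B_R', and U ≥ 0 on ∂B_R'', then U ≥ 0 on the closure of B_R. The same conclusion holds with B_R and ∂B_R' replaced by ℝ^N₊ and ℝ^n respectively, provided the condition U≥0 on ∂B_R'' is replaced by |U(x)|/V(x) → 0 uniformly as |x|→∞. -/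

import Mathlib

noncomputable section

open MeasureTheory Real Filter Topology Set

namespace Frac

/-- Points of the closed half space `ℝ^{n+1}`. -/
abbrev Pt (n : ℕ) : Type := EuclideanSpace ℝ (Fin (n + 1))

/-- Points of the boundary `ℝ^n`. -/
abbrev Bd (n : ℕ) : Type := EuclideanSpace ℝ (Fin n)

/-- The last (vertical) coordinate `x_N`. -/
def xN {n : ℕ} (x : Pt n) : ℝ := x (Fin.last n)

/-- The point `(x̄, t)`. -/
def pt {n : ℕ} (y : Bd n) (t : ℝ) : Pt n := WithLp.toLp 2 (fun i => Fin.lastCases t (fun j => y j) i)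

/-- The open upper half space. -/
def H (n : ℕ) : Set (Pt n) := {x | 0 < xN x}

/-- The closed upper half space. -/
def Hcl (n : ℕ) : Set (Pt n) := {x | 0 ≤ xN x}

/-- The weight `x_N^{1-2γ}`. -/
def wt {n : ℕ} (γ : ℝ) (x : Pt n) : ℝ := xN x ^ (1 - 2 * γ)

/-- Partial derivative in the coordinate direction `α`. -/
def pd {n : ℕ} (α : Fin (n + 1)) (U : Pt n → ℝ) (x : Pt n) : ℝ :=
  fderiv ℝ U x (EuclideanSpace.single α 1)

/-- Tangential partial derivative `∂_i`. -/
def tpd {n : ℕ} (i : Fin n) (U : Pt n → ℝ) : Pt n → ℝ := pd i.castSucc U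

/-- Vertical partial derivative `∂_N`. -/
def pdN {n : ℕ} (U : Pt n → ℝ) : Pt n → ℝ := pd (Fin.last n) U

/-- Iterated tangential derivative along the tuple of directions `v`. -/
def tpdIter {n : ℕ} : {ℓ : ℕ} → (Fin ℓ → Fin n) → (Pt n → ℝ) → Pt n → ℝ
  | 0, _, U => U
  | (_ + 1), v, U => tpd (v 0) (tpdIter (fun j => v j.succ) U)

/-- Partial derivative on the boundary `ℝ^n`. -/
def pdE {n : ℕ} (i : Fin n) (f : Bd n → ℝ) (y : Bd n) : ℝ :=
  fderiv ℝ f y (EuclideanSpace.single i 1)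

/-- Iterated partial derivative on the boundary `ℝ^n`. -/
def pdEIter {n : ℕ} : {ℓ : ℕ} → (Fin ℓ → Fin n) → (Bd n → ℝ) → Bd n → ℝ
  | 0, _, f => f
  | (_ + 1), v, f => pdE (v 0) (pdEIter (fun j => v j.succ) f)

/-- The full Euclidean Laplacian on `ℝ^{n+1}`. -/
def lap {n : ℕ} (U : Pt n → ℝ) (x : Pt n) : ℝ := ∑ α, pd α (pd α U) x

/-- The tangential Laplacian `Δ_{x̄}`. -/
def lapT {n : ℕ} (U : Pt n → ℝ) (x : Pt n) : ℝ := ∑ i : Fin n, tpd i (tpd i U) x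

/-- The constant `κ_γ`. -/
def kap (γ : ℝ) : ℝ := 2 ^ (-(1 - 2 * γ)) * Real.Gamma γ / Real.Gamma (1 - γ)

/-- `conormal γ U y d` means that `∂_ν^γ U (y) = d`, i.e.
`-κ_γ · lim_{t→0+} t^{1-2γ} ∂_N U(y,t) = d`. -/
def conormal {n : ℕ} (γ : ℝ) (U : Pt n → ℝ) (y : Bd n) (d : ℝ) : Prop :=
  Tendsto (fun t : ℝ => -kap γ * (t ^ (1 - 2 * γ) * pdN U (pt y t)))
    (nhdsWithin 0 (Ioi 0)) (nhds d)

/-- The constant `α_{n,γ}`. -/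
def alph (n : ℕ) (γ : ℝ) : ℝ :=
  2 ^ (((n : ℝ) - 2 * γ) / 2) *
    (Real.Gamma (((n : ℝ) + 2 * γ) / 2) / Real.Gamma (((n : ℝ) - 2 * γ) / 2)) ^
      (((n : ℝ) - 2 * γ) / (4 * γ))

/-- The standard bubble `w_{λ,σ}`. -/
def bub (n : ℕ) (γ lam : ℝ) (σ y : Bd n) : ℝ :=
  alph n γ * (lam / (lam ^ 2 + ‖y - σ‖ ^ 2)) ^ (((n : ℝ) - 2 * γ) / 2)

/-- `U` solves `-div(x_N^{1-2γ} ∇U) = x_N^{1-2γ} G` pointwise (classically) in the upper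
half space; after multiplication by `x_N^{2γ}` this reads
`x_N ΔU + (1-2γ) ∂_N U + x_N G = 0`. -/
def EqDiv {n : ℕ} (γ : ℝ) (G U : Pt n → ℝ) : Prop :=
  ∀ x ∈ H n, xN x * lap U x + (1 - 2 * γ) * pdN U x + xN x * G x = 0

/-- `W` is the γ-harmonic extension of `w` to the upper half space: it is continuous up to
the boundary, smooth inside, solves `div(x_N^{1-2γ}∇W) = 0`, has trace `w`, and has finite
weighted Dirichlet energy (membership in `D^{1,2}(ℝ^{n+1}_+; x_N^{1-2γ})`). -/
def IsExt (n : ℕ) (γ : ℝ) (w : Bd n → ℝ) (W : Pt n → ℝ) : Prop :=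
  ContinuousOn W (Hcl n) ∧
  (∀ x ∈ H n, ContDiffAt ℝ (⊤ : ℕ∞) W x) ∧
  EqDiv γ (fun _ => 0) W ∧
  (∀ y : Bd n, W (pt y 0) = w y) ∧
  IntegrableOn (fun x => wt γ x * ‖fderiv ℝ W x‖ ^ 2) (H n)

/-- The open half ball `B^N_+((x₀,0), R)`. -/
def hb {n : ℕ} (x₀ : Bd n) (R : ℝ) : Set (Pt n) := {x | 0 < xN x ∧ ‖x - pt x₀ 0‖ < R}

/-- The flat boundary part `B^n(x₀, R)`, as a subset of `ℝ^n`. -/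
def fb {n : ℕ} (x₀ : Bd n) (R : ℝ) : Set (Bd n) := Metric.ball x₀ R

/-- The spherical boundary part `∂_I B^N_+((x₀,0),R)`. -/
def sb {n : ℕ} (x₀ : Bd n) (R : ℝ) : Set (Pt n) := {x | 0 < xN x ∧ ‖x - pt x₀ 0‖ = R}

/-- A metric: a matrix field on the half space. -/
abbrev Met (n : ℕ) : Type := Pt n → Matrix (Fin (n + 1)) (Fin (n + 1)) ℝ

/-- The volume density `√|ḡ|`. -/
def dvol {n : ℕ} (g : Met n) (x : Pt n) : ℝ := Real.sqrt (g x).det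

/-- The inner product `⟨∇U, ∇Φ⟩_ḡ = ḡ^{αβ} ∂_α U ∂_β Φ`. -/
def ipg {n : ℕ} (g : Met n) (U Φ : Pt n → ℝ) (x : Pt n) : ℝ :=
  ∑ α, ∑ β, (g x)⁻¹ α β * pd α U x * pd β Φ x

/-- Condition (g1) on the set `S`: `ḡ` is smooth, symmetric, split (`ḡ_{iN} = 0`,
`ḡ_{NN} = 1`) and uniformly elliptic with constants `lg ≤ Lg` in the tangential block. -/
def G1 {n : ℕ} (g : Met n) (S : Set (Pt n)) (lg Lg : ℝ) : Prop :=
  (∀ α β, ContDiffOn ℝ (⊤ : ℕ∞) (fun x => g x α β) S) ∧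
  (∀ x ∈ S, (g x).IsSymm) ∧
  (∀ x ∈ S, ∀ i : Fin n, g x i.castSucc (Fin.last n) = 0 ∧ g x (Fin.last n) i.castSucc = 0) ∧
  (∀ x ∈ S, g x (Fin.last n) (Fin.last n) = 1) ∧
  (∀ x ∈ S, ∀ ξ : Fin n → ℝ,
    lg * ∑ i, ξ i ^ 2 ≤ ∑ i, ∑ j, g x i.castSucc j.castSucc * ξ i * ξ j ∧
      ∑ i, ∑ j, g x i.castSucc j.castSucc * ξ i * ξ j ≤ Lg * ∑ i, ξ i ^ 2)

/-- Condition (g2) on the set `S`, up to order `ℓ₀`: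
`|∇_{x̄}^ℓ ∂_N √|ḡ|(x)| ≤ C x_N` for all `0 ≤ ℓ ≤ ℓ₀`. -/
def G2 {n : ℕ} (g : Met n) (S : Set (Pt n)) (ℓ₀ : ℕ) : Prop :=
  ∃ C > 0, ∀ ℓ : ℕ, ℓ ≤ ℓ₀ → ∀ v : Fin ℓ → Fin n, ∀ x ∈ S,
    |tpdIter v (pdN fun z => dvol g z) x| ≤ C * xN x

/-- Test functions for the weak formulation on `B_R`: `C¹` functions vanishing on the
spherical boundary `∂B_R''`. -/
def TestOn {n : ℕ} (x₀ : Bd n) (R : ℝ) (Φ : Pt n → ℝ) : Prop :=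
  ContDiff ℝ 1 Φ ∧ ∀ x ∈ sb x₀ R, Φ x = 0

/-- Membership in the weighted Sobolev space `W^{1,2}(S; x_N^{1-2γ})` (with classical
differentiability in the interior). -/
def MemW12 {n : ℕ} (γ : ℝ) (S : Set (Pt n)) (U : Pt n → ℝ) : Prop :=
  (∀ x ∈ S, DifferentiableAt ℝ U x) ∧
  IntegrableOn (fun x => wt γ x * (‖fderiv ℝ U x‖ ^ 2 + U x ^ 2)) S

/-- `U` is a weak solution of
`-div_ḡ(x_N^{1-2γ}∇U) + x_N^{1-2γ} A U = x_N^{1-2γ} Q + div(x_N^{1-2γ} F)` in `B_R`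
with `∂^γ_{ν,F} U = a u + q` on `∂B_R'`. -/
def WeakSol {n : ℕ} (γ : ℝ) (x₀ : Bd n) (R : ℝ) (g : Met n) (A Q : Pt n → ℝ)
    (F : Pt n → Pt n) (a q : Bd n → ℝ) (U : Pt n → ℝ) : Prop :=
  ∀ Φ : Pt n → ℝ, TestOn x₀ R Φ →
    kap γ * ∫ x in hb x₀ R, wt γ x * (ipg g U Φ x + A x * U x * Φ x) * dvol g x =
      kap γ * ∫ x in hb x₀ R, wt γ x * (Q x * Φ x - ∑ α, F x α * pd α Φ x) * dvol g x +
        ∫ y in fb x₀ R, (a y * U (pt y 0) + q y) * Φ (pt y 0) * dvol g (pt y 0)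

/-- The weighted `L^q` "norm" on a subset of the half space. -/
def wLp {n : ℕ} (γ q : ℝ) (S : Set (Pt n)) (f : Pt n → ℝ) : ℝ :=
  (∫ x in S, wt γ x * |f x| ^ q) ^ (1 / q)

/-- The `L^q` norm on a subset of the boundary `ℝ^n`. -/
def bLp {n : ℕ} (q : ℝ) (S : Set (Bd n)) (f : Bd n → ℝ) : ℝ :=
  (∫ y in S, |f y| ^ q) ^ (1 / q)

/-- The radial derivative `∂U/∂r`. -/
def rd {n : ℕ} (U : Pt n → ℝ) (x : Pt n) : ℝ := fderiv ℝ U x (‖x‖⁻¹ • x)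

/-- Hölder continuity (with some positive exponent) on a set. -/
def HolderContOn {X : Type*} [PseudoEMetricSpace X] (f : X → ℝ) (s : Set X) : Prop :=
  ∃ (C β : NNReal), 0 < β ∧ HolderOnWith C β f s


/-- Classical regularity used in the generalized maximum principle: continuity up to the
boundary, `C²` in the interior, and continuity of the tangential gradient up to the
boundary. -/
def ClassReg {n : ℕ} (S : Set (Pt n)) (U : Pt n → ℝ) : Prop :=
  ContinuousOn U (closure S) ∧ (∀ x ∈ S, ContDiffAt ℝ 2 U x) ∧
  ∀ i : Fin n, ∃ T : Pt n → ℝ, ContinuousOn T (closure S) ∧ ∀ x ∈ S, T x = tpd i U x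

/-- The pointwise differential inequality `-div(x_N^{1-2γ}∇U) + x_N^{1-2γ} A U ≥ 0`
(multiplied through by `x_N^{2γ} > 0`). -/
def SuperSol {n : ℕ} (γ : ℝ) (S : Set (Pt n)) (A U : Pt n → ℝ) : Prop :=
  ∀ x ∈ S, xN x * lap U x + (1 - 2 * γ) * pdN U x - xN x * A x * U x ≤ 0

section Aux

variable {n : ℕ}

lemma kap_pos {γ : ℝ} (h0 : 0 < γ) (h1 : γ < 1) : 0 < kap γ := by
  unfold kap
  have h2 : 0 < Real.Gamma γ := Real.Gamma_pos_of_pos h0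
  have h3 : 0 < Real.Gamma (1 - γ) := Real.Gamma_pos_of_pos (by linarith)
  positivity

/-- The vertical unit vector. -/
def eN (n : ℕ) : Pt n := EuclideanSpace.single (Fin.last n) 1

lemma pt_apply_last (y : Bd n) (t : ℝ) : (pt y t) (Fin.last n) = t := by
  simp [pt]

lemma pt_apply_castSucc (y : Bd n) (t : ℝ) (i : Fin n) : (pt y t) i.castSucc = y i := by
  simp [pt]

lemma xN_pt (y : Bd n) (t : ℝ) : xN (pt y t) = t := pt_apply_last y t

lemma pt_eq_add (y : Bd n) (t : ℝ) : pt y t = pt y 0 + t • eN n := by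
  ext i
  rw [PiLp.add_apply, PiLp.smul_apply]
  induction i using Fin.lastCases with
  | last => simp [pt_apply_last, eN, EuclideanSpace.single_apply]
  | cast j => simp [pt_apply_castSucc, eN, EuclideanSpace.single_apply, (Fin.castSucc_lt_last j).ne]

lemma xN_eq_proj (x : Pt n) : xN x = EuclideanSpace.proj (𝕜 := ℝ) (Fin.last n) x := rfl

lemma continuous_xN : Continuous (xN (n := n)) :=
  (EuclideanSpace.proj (𝕜 := ℝ) (Fin.last n)).continuous

lemma continuous_pt (y : Bd n) : Continuous (fun t : ℝ => pt y t) := by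
  have : (fun t : ℝ => pt y t) = fun t : ℝ => pt y 0 + t • eN n := by
    funext t; exact pt_eq_add y t
  rw [this]
  exact continuous_const.add (continuous_id.smul continuous_const)

lemma norm_pt_sub_pt (y z : Bd n) (s t : ℝ) :
    ‖pt y s - pt z t‖ ^ 2 = ‖y - z‖ ^ 2 + (s - t) ^ 2 := by
  have h1 : ‖pt y s - pt z t‖ ^ 2 = ∑ i, ((pt y s - pt z t) i) ^ 2 := by
    rw [EuclideanSpace.norm_eq, Real.sq_sqrt (by positivity)]
    simp [sq_abs]
  have h2 : ‖y - z‖ ^ 2 = ∑ i, ((y - z) i) ^ 2 := by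
    rw [EuclideanSpace.norm_eq, Real.sq_sqrt (by positivity)]
    simp [sq_abs]
  rw [h1, h2, Fin.sum_univ_castSucc]
  congr 1
  · apply Finset.sum_congr rfl
    intro i _
    rw [PiLp.sub_apply, PiLp.sub_apply, pt_apply_castSucc, pt_apply_castSucc]
  · rw [PiLp.sub_apply, pt_apply_last, pt_apply_last]

lemma pt_zero_eq_zero : pt (0 : Bd n) 0 = 0 := by
  ext i
  induction i using Fin.lastCases with
  | last => simp [pt_apply_last]
  | cast j => simp [pt_apply_castSucc]

lemma norm_pt (y : Bd n) (t : ℝ) : ‖pt y t‖ ^ 2 = ‖y‖ ^ 2 + t ^ 2 := by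
  have := norm_pt_sub_pt y 0 t 0
  rw [pt_zero_eq_zero] at this
  simpa using this

lemma norm_pt_sub_pt_self (y : Bd n) (s t : ℝ) : ‖pt y s - pt y t‖ = |s - t| := by
  have := norm_pt_sub_pt y y s t
  simp only [sub_self, norm_zero] at this
  nlinarith [abs_nonneg (s - t), norm_nonneg (pt y s - pt y t), sq_abs (s - t)]

/-- First `n` coordinates. -/
def bd (x : Pt n) : Bd n := WithLp.toLp 2 (fun i => x i.castSucc)

lemma pt_bd {x : Pt n} (hx : xN x = 0) : x = pt (bd x) 0 := by
  ext i
  induction i using Fin.lastCases with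
  | last => rw [pt_apply_last]; exact hx
  | cast j => rw [pt_apply_castSucc]; rfl

lemma norm_bd {x : Pt n} (hx : xN x = 0) : ‖bd x‖ = ‖x‖ := by
  have h := norm_pt (bd x) 0
  rw [← pt_bd hx] at h
  nlinarith [norm_nonneg x, norm_nonneg (bd x)]

end Aux
section PD

variable {n : ℕ}

lemma pd_congr_nhds {f g : Pt n → ℝ} {x : Pt n} (h : f =ᶠ[𝓝 x] g) (α : Fin (n + 1)) :
    pd α f x = pd α g x := by
  unfold pd; rw [h.fderiv_eq]

lemma differentiableAt_fderiv_apply {f : Pt n → ℝ} {x : Pt n} (hf : ContDiffAt ℝ 2 f x)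
    (v : Pt n) : DifferentiableAt ℝ (fun y => fderiv ℝ f y v) x := by
  have h1 : ContDiffAt ℝ 1 (fderiv ℝ f) x := hf.fderiv_right (by norm_num)
  have h2 : DifferentiableAt ℝ (fderiv ℝ f) x := h1.differentiableAt one_ne_zero
  exact (ContinuousLinearMap.apply ℝ ℝ v).differentiableAt.comp x h2

lemma differentiableAt_pd {f : Pt n → ℝ} {x : Pt n} (hf : ContDiffAt ℝ 2 f x)
    (α : Fin (n + 1)) : DifferentiableAt ℝ (pd α f) x :=
  differentiableAt_fderiv_apply hf (EuclideanSpace.single α 1)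

lemma hasDerivAt_line {f : Pt n → ℝ} (x v : Pt n) {t : ℝ}
    (hf : DifferentiableAt ℝ f (x + t • v)) :
    HasDerivAt (fun s : ℝ => f (x + s • v)) (fderiv ℝ f (x + t • v) v) t := by
  have hc : HasDerivAt (fun s : ℝ => x + s • v) v t := by
    simpa using ((hasDerivAt_id t).smul_const v).const_add x
  exact hf.hasFDerivAt.comp_hasDerivAt t hc

lemma second_deriv_nonneg {g g' : ℝ → ℝ} {q : ℝ}
    (hg' : ∀ᶠ t in 𝓝 (0 : ℝ), HasDerivAt g (g' t) t)
    (hg'' : HasDerivAt g' q 0) (h0 : g' 0 = 0) (hmin : IsLocalMin g 0) : 0 ≤ q := by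
  by_contra hq
  push_neg at hq
  have hslope : Tendsto (slope g' 0) (𝓝[≠] 0) (𝓝 q) := hasDerivAt_iff_tendsto_slope.1 hg''
  have h1 : ∀ᶠ t in 𝓝[≠] (0 : ℝ), slope g' 0 t < 0 := hslope.eventually (Iio_mem_nhds hq)
  have hneg : ∀ᶠ t in 𝓝[>] (0 : ℝ), g' t < 0 := by
    have h2 : ∀ᶠ t in 𝓝[>] (0 : ℝ), slope g' 0 t < 0 :=
      h1.filter_mono (nhdsWithin_mono 0 (fun t ht => ne_of_gt ht))
    refine (h2.and self_mem_nhdsWithin).mono ?_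
    rintro t ⟨hts, ht0⟩
    have hts' : g' t / t < 0 := by
      simpa [slope_def_field, h0] using hts
    have ht0' : (0 : ℝ) < t := ht0
    have := mul_neg_of_neg_of_pos hts' ht0'
    rwa [div_mul_cancel₀ _ (ne_of_gt ht0')] at this
  rcases (mem_nhdsGT_iff_exists_Ioo_subset).1 hneg with ⟨δ1, hδ1, hsub⟩
  have hδ1' : 0 < δ1 := hδ1
  rcases Metric.eventually_nhds_iff.1 hg' with ⟨δ2, hδ2, hg2⟩
  rcases Metric.eventually_nhds_iff.1 hmin with ⟨δ3, hδ3, hm3⟩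
  set δ : ℝ := min (min δ1 δ2) δ3 / 2 with hδdef
  have hδpos : 0 < δ := by positivity
  have hδlt1 : δ < δ1 := by
    have : δ ≤ min δ1 δ2 / 2 := by
      apply div_le_div_of_nonneg_right ?_ (by norm_num)
      exact min_le_left _ _
    have h2 : min δ1 δ2 / 2 < δ1 := by
      have := min_le_left δ1 δ2; linarith
    linarith
  have hδlt2 : δ < δ2 := by
    have : δ ≤ min δ1 δ2 / 2 := by
      apply div_le_div_of_nonneg_right ?_ (by norm_num)
      exact min_le_left _ _
    have h2 : min δ1 δ2 / 2 < δ2 := by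
      have := min_le_right δ1 δ2; linarith
    linarith
  have hδlt3 : δ < δ3 := by
    have h2 : δ3 / 2 < δ3 := by linarith
    have : δ ≤ δ3 / 2 := by
      apply div_le_div_of_nonneg_right ?_ (by norm_num)
      exact min_le_right _ _
    linarith
  have hderiv : ∀ t ∈ Icc (0 : ℝ) δ, HasDerivAt g (g' t) t := by
    intro t ht
    apply hg2
    rw [Real.dist_eq]
    rcases ht with ⟨h1', h2'⟩
    rw [abs_of_nonneg (by linarith)]
    simp only [sub_zero]
    linarith
  have hanti : StrictAntiOn g (Icc (0 : ℝ) δ) := by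
    apply strictAntiOn_of_deriv_neg (convex_Icc _ _)
    · intro t ht
      exact (hderiv t ht).continuousAt.continuousWithinAt
    · intro t ht
      rw [interior_Icc] at ht
      rw [(hderiv t ⟨le_of_lt ht.1, le_of_lt ht.2⟩).deriv]
      exact hsub ⟨ht.1, lt_of_lt_of_le ht.2 (le_of_lt hδlt1)⟩
  have h5 : g 0 > g δ := hanti ⟨le_refl _, le_of_lt hδpos⟩ ⟨le_of_lt hδpos, le_refl _⟩ hδpos
  have h6 : g 0 ≤ g δ := by
    apply hm3
    rw [Real.dist_eq, sub_zero, abs_of_pos hδpos]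
    exact hδlt3
  linarith

lemma pdpd_nonneg_of_isLocalMin {φ : Pt n → ℝ} {x : Pt n} (hφ : ContDiffAt ℝ 2 φ x)
    (hmin : IsLocalMin φ x) (α : Fin (n + 1)) : 0 ≤ pd α (pd α φ) x := by
  set v := EuclideanSpace.single (𝕜 := ℝ) α (1 : ℝ) with hv
  have hcurve : Continuous fun t : ℝ => x + t • v :=
    continuous_const.add (continuous_id.smul continuous_const)
  have h0c : x + (0 : ℝ) • v = x := by simp
  have htend : Tendsto (fun t : ℝ => x + t • v) (𝓝 0) (𝓝 x) := by
    have := hcurve.tendsto 0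
    rwa [h0c] at this
  have hevφ : ∀ᶠ y in 𝓝 x, ContDiffAt ℝ 2 φ y := hφ.eventually (by simp)
  have hevt : ∀ᶠ t in 𝓝 (0 : ℝ), ContDiffAt ℝ 2 φ (x + t • v) := htend.eventually hevφ
  have hg' : ∀ᶠ t in 𝓝 (0 : ℝ), HasDerivAt (fun s : ℝ => φ (x + s • v))
      ((fun s : ℝ => fderiv ℝ φ (x + s • v) v) t) t := by
    refine hevt.mono fun t ht => ?_
    exact hasDerivAt_line x v (ht.differentiableAt two_ne_zero)
  have hd1 : DifferentiableAt ℝ (fun y => fderiv ℝ φ y v) x := differentiableAt_fderiv_apply hφ v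
  have hg'' : HasDerivAt (fun s : ℝ => fderiv ℝ φ (x + s • v) v)
      (fderiv ℝ (fun y => fderiv ℝ φ y v) x v) 0 := by
    have := hasDerivAt_line (f := fun y => fderiv ℝ φ y v) x v (t := 0) (by rwa [h0c])
    rwa [h0c] at this
  have hg0 : (fun s : ℝ => fderiv ℝ φ (x + s • v) v) 0 = 0 := by
    show fderiv ℝ φ (x + (0 : ℝ) • v) v = 0
    rw [h0c, hmin.fderiv_eq_zero]; rfl
  have hgmin : IsLocalMin (fun s : ℝ => φ (x + s • v)) 0 := by
    have h := htend.eventually hmin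
    refine h.mono fun t ht => ?_
    simpa [h0c] using ht
  have key := second_deriv_nonneg hg' hg'' hg0 hgmin
  have : pd α (pd α φ) x = fderiv ℝ (fun y => fderiv ℝ φ y v) x v := rfl
  rwa [this]

end PD
section Prod

variable {n : ℕ}

lemma pd_mul {f g : Pt n → ℝ} {x : Pt n} (hf : DifferentiableAt ℝ f x)
    (hg : DifferentiableAt ℝ g x) (α : Fin (n + 1)) :
    pd α (fun y => f y * g y) x = f x * pd α g x + g x * pd α f x := by
  unfold pd
  rw [fderiv_fun_mul hf hg]
  simp [ContinuousLinearMap.add_apply, ContinuousLinearMap.smul_apply]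

lemma pd_add {f g : Pt n → ℝ} {x : Pt n} (hf : DifferentiableAt ℝ f x)
    (hg : DifferentiableAt ℝ g x) (α : Fin (n + 1)) :
    pd α (fun y => f y + g y) x = pd α f x + pd α g x := by
  unfold pd
  rw [fderiv_fun_add hf hg]
  simp

lemma pd_sub_const_mul {f g : Pt n → ℝ} {x : Pt n} (c : ℝ) (hf : DifferentiableAt ℝ f x)
    (hg : DifferentiableAt ℝ g x) (α : Fin (n + 1)) :
    pd α (fun y => f y - c * g y) x = pd α f x - c * pd α g x := by
  unfold pd
  rw [fderiv_fun_sub hf (hg.const_mul c), fderiv_const_mul hg]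
  simp

lemma pdpd_mul {f g : Pt n → ℝ} {x : Pt n} (hf : ContDiffAt ℝ 2 f x)
    (hg : ContDiffAt ℝ 2 g x) (α : Fin (n + 1)) :
    pd α (pd α (fun y => f y * g y)) x =
      f x * pd α (pd α g) x + 2 * pd α f x * pd α g x + g x * pd α (pd α f) x := by
  have hev : (pd α fun y => f y * g y) =ᶠ[𝓝 x]
      (fun y => f y * pd α g y + g y * pd α f y) := by
    have h2f : ∀ᶠ y in 𝓝 x, ContDiffAt ℝ 2 f y := hf.eventually (by simp)
    have h2g : ∀ᶠ y in 𝓝 x, ContDiffAt ℝ 2 g y := hg.eventually (by simp)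
    filter_upwards [h2f, h2g] with y h1 h2
    exact pd_mul (h1.differentiableAt two_ne_zero) (h2.differentiableAt two_ne_zero) α
  rw [pd_congr_nhds hev α]
  have hdf : DifferentiableAt ℝ f x := hf.differentiableAt two_ne_zero
  have hdg : DifferentiableAt ℝ g x := hg.differentiableAt two_ne_zero
  have hdpf : DifferentiableAt ℝ (pd α f) x := differentiableAt_pd hf α
  have hdpg : DifferentiableAt ℝ (pd α g) x := differentiableAt_pd hg α
  rw [pd_add (f := fun y => f y * pd α g y) (g := fun y => g y * pd α f y) (hdf.mul hdpg) (hdg.mul hdpf) α, pd_mul hdf hdpg α, pd_mul hdg hdpf α]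
  ring

end Prod

section Barrier

variable {n : ℕ}

/-- The barrier function `exp (Kc · x_N^c)`. -/
def bar (Kc c : ℝ) (x : Pt n) : ℝ := Real.exp (Kc * xN x ^ c)

/-- First derivative profile of the barrier. -/
def barD1 (Kc c t : ℝ) : ℝ := Kc * c * t ^ (c - 1) * Real.exp (Kc * t ^ c)

/-- Second derivative profile of the barrier. -/
def barD2 (Kc c t : ℝ) : ℝ :=
  Kc * c * ((c - 1) * t ^ (c - 2)) * Real.exp (Kc * t ^ c) +
    Kc * c * t ^ (c - 1) * (Kc * c * t ^ (c - 1) * Real.exp (Kc * t ^ c))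

lemma hasDerivAt_barF {Kc c t : ℝ} (ht : t ≠ 0) :
    HasDerivAt (fun s : ℝ => Real.exp (Kc * s ^ c)) (barD1 Kc c t) t := by
  have h1 : HasDerivAt (fun s : ℝ => s ^ c) (c * t ^ (c - 1)) t :=
    Real.hasDerivAt_rpow_const (Or.inl ht)
  have h2 : HasDerivAt (fun s : ℝ => Kc * s ^ c) (Kc * (c * t ^ (c - 1))) t := h1.const_mul Kc
  have h3 := (Real.hasDerivAt_exp (Kc * t ^ c)).comp t h2
  unfold barD1
  exact h3.congr_deriv (by ring)

lemma hasDerivAt_barD1 {Kc c t : ℝ} (ht : t ≠ 0) :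
    HasDerivAt (fun s : ℝ => barD1 Kc c s) (barD2 Kc c t) t := by
  have h1 : HasDerivAt (fun s : ℝ => s ^ (c - 1)) ((c - 1) * t ^ (c - 1 - 1)) t :=
    Real.hasDerivAt_rpow_const (Or.inl ht)
  have h2 : HasDerivAt (fun s : ℝ => Kc * c * s ^ (c - 1)) (Kc * c * ((c - 1) * t ^ (c - 1 - 1))) t :=
    h1.const_mul (Kc * c)
  have h3 := hasDerivAt_barF (Kc := Kc) (c := c) ht
  have h4 := h2.mul h3
  unfold barD1 at h4 ⊢
  unfold barD2
  have h5 : c - 1 - 1 = c - 2 := by ring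
  exact h4.congr_deriv (by rw [h5])

/-- Projection onto the last coordinate, as a continuous linear map. -/
def projN (n : ℕ) : Pt n →L[ℝ] ℝ := EuclideanSpace.proj (𝕜 := ℝ) (Fin.last n)

lemma projN_apply (x : Pt n) : projN n x = xN x := rfl

lemma projN_single (α : Fin (n + 1)) :
    projN n (EuclideanSpace.single α 1) = if α = Fin.last n then 1 else 0 := by
  rw [projN_apply]
  unfold xN
  rw [EuclideanSpace.single_apply]
  by_cases h : α = Fin.last n <;> simp [h, eq_comm]

lemma pd_comp_xN {φ : ℝ → ℝ} {φ' : ℝ} {x : Pt n} (h : HasDerivAt φ φ' (xN x)) (α : Fin (n + 1)) :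
    pd α (fun y => φ (xN y)) x = φ' * (if α = Fin.last n then 1 else 0) := by
  have h2 : HasFDerivAt (fun y : Pt n => φ (xN y)) (φ' • projN n) x :=
    h.comp_hasFDerivAt x (projN n).hasFDerivAt
  unfold pd
  rw [h2.fderiv]
  rw [ContinuousLinearMap.smul_apply, projN_single]
  simp

lemma continuous_bar (Kc c : ℝ) (hc : 0 < c) : Continuous (bar (n := n) Kc c) := by
  unfold bar
  apply Real.continuous_exp.comp
  apply Continuous.mul continuous_const
  refine continuous_iff_continuousAt.2 fun x => ?_
  exact (Real.continuousAt_rpow_const _ _ (Or.inr (le_of_lt hc))).comp continuous_xN.continuousAt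

lemma bar_pos (Kc c : ℝ) (x : Pt n) : 0 < bar Kc c x := Real.exp_pos _

lemma one_le_bar {Kc c : ℝ} (hKc : 0 ≤ Kc) {x : Pt n} (hx : 0 ≤ xN x) :
    1 ≤ bar Kc c x := by
  unfold bar
  rw [← Real.exp_zero]
  apply Real.exp_le_exp.2
  positivity

lemma bar_le {Kc c : ℝ} (hKc : 0 ≤ Kc) (hc : 0 ≤ c) {x : Pt n} {RN : ℝ} (hx : 0 ≤ xN x)
    (hRN : xN x ≤ RN) : bar Kc c x ≤ Real.exp (Kc * RN ^ c) := by
  unfold bar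
  apply Real.exp_le_exp.2
  apply mul_le_mul_of_nonneg_left ?_ hKc
  exact Real.rpow_le_rpow hx hRN hc

lemma contDiffAt_bar {Kc c : ℝ} {x : Pt n} (hx : xN x ≠ 0) :
    ContDiffAt ℝ 2 (bar (n := n) Kc c) x := by
  unfold bar
  have h1 : ContDiffAt ℝ 2 (fun t : ℝ => t ^ c) (xN x) :=
    Real.contDiffAt_rpow_const_of_ne hx
  have h2 : ContDiffAt ℝ 2 (xN (n := n)) x := (ContDiff.contDiffAt (projN n).contDiff)
  have h3 : ContDiffAt ℝ 2 (fun y : Pt n => xN y ^ c) x := h1.comp x h2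
  exact (Real.contDiff_exp.contDiffAt).comp x ((contDiffAt_const.mul h3))

lemma eventually_xN_pos {x : Pt n} (hx : 0 < xN x) : ∀ᶠ y in 𝓝 x, 0 < xN y := by
  have h : ContinuousAt (xN (n := n)) x := continuous_xN.continuousAt
  exact h (Ioi_mem_nhds hx)

end Barrier
section MorePD

variable {n : ℕ}

lemma pdpd_sub_const_mul {f g : Pt n → ℝ} {x : Pt n} (c' : ℝ) (hf : ContDiffAt ℝ 2 f x)
    (hg : ContDiffAt ℝ 2 g x) (α : Fin (n + 1)) :
    pd α (pd α (fun y => f y - c' * g y)) x = pd α (pd α f) x - c' * pd α (pd α g) x := by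
  have hev : (pd α fun y => f y - c' * g y) =ᶠ[𝓝 x] fun y => pd α f y - c' * pd α g y := by
    filter_upwards [hf.eventually (by simp), hg.eventually (by simp)] with y h1 h2
    exact pd_sub_const_mul c' (h1.differentiableAt two_ne_zero) (h2.differentiableAt two_ne_zero) α
  rw [pd_congr_nhds hev α]
  exact pd_sub_const_mul c' (differentiableAt_pd hf α) (differentiableAt_pd hg α) α

lemma pd_bar {Kc c : ℝ} {x : Pt n} (hx : xN x ≠ 0) (α : Fin (n + 1)) :
    pd α (bar Kc c) x = barD1 Kc c (xN x) * (if α = Fin.last n then 1 else 0) :=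
  pd_comp_xN (hasDerivAt_barF hx) α

lemma pdpd_bar {Kc c : ℝ} {x : Pt n} (hx : 0 < xN x) (α : Fin (n + 1)) :
    pd α (pd α (bar Kc c)) x = barD2 Kc c (xN x) * (if α = Fin.last n then 1 else 0) := by
  have hev : pd α (bar Kc c) =ᶠ[𝓝 x]
      fun y => (if α = Fin.last n then (1 : ℝ) else 0) * barD1 Kc c (xN y) := by
    filter_upwards [eventually_xN_pos hx] with y hy
    rw [pd_bar (ne_of_gt hy) α]; ring
  rw [pd_congr_nhds hev α]
  by_cases hα : α = Fin.last n
  · have h1 : (fun y : Pt n => (if α = Fin.last n then (1 : ℝ) else 0) * barD1 Kc c (xN y))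
        = fun y => barD1 Kc c (xN y) := by funext y; rw [if_pos hα, one_mul]
    rw [h1, pd_comp_xN (hasDerivAt_barD1 (ne_of_gt hx)) α, if_pos hα, mul_one]
  · have h1 : (fun y : Pt n => (if α = Fin.last n then (1 : ℝ) else 0) * barD1 Kc c (xN y))
        = fun _ => (0 : ℝ) := by funext y; rw [if_neg hα, zero_mul]
    rw [h1, if_neg hα, mul_zero]
    unfold pd
    simp

end MorePD
section Glue

variable {n : ℕ}

lemma isClosed_Hcl : IsClosed (Hcl n) :=
  IsClosed.preimage continuous_xN isClosed_Ici

lemma isOpen_H : IsOpen (H n) := isOpen_lt continuous_const continuous_xN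

lemma xN_add_smul (x : Pt n) (t : ℝ) : xN (x + t • eN n) = xN x + t := by
  unfold xN eN
  rw [PiLp.add_apply, PiLp.smul_apply, EuclideanSpace.single_apply]
  simp

lemma inner_eN_of_xN_zero {x : Pt n} (hx : xN x = 0) : inner ℝ x (eN n) = (0 : ℝ) := by
  unfold eN
  rw [EuclideanSpace.inner_single_right]
  simp only [map_one, one_mul]
  exact hx

lemma closure_H : closure (H n) = Hcl n := by
  apply Subset.antisymm
  · exact closure_minimal (fun x hx => (le_of_lt (hx : 0 < xN x) : 0 ≤ xN x)) isClosed_Hcl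
  · intro x hx
    have htend : Tendsto (fun t : ℝ => x + t • eN n) (𝓝[>] 0) (𝓝 x) := by
      have hc : Continuous (fun t : ℝ => x + t • eN n) :=
        continuous_const.add (continuous_id.smul continuous_const)
      have h0 : x + (0 : ℝ) • eN n = x := by simp
      have := hc.tendsto 0
      rw [h0] at this
      exact this.mono_left nhdsWithin_le_nhds
    refine mem_closure_of_tendsto htend ?_
    filter_upwards [self_mem_nhdsWithin] with t ht
    show 0 < xN (x + t • eN n)
    rw [xN_add_smul]
    have : (0 : ℝ) ≤ xN x := hx
    have ht' : (0 : ℝ) < t := ht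
    linarith

lemma norm_pt_zero (y : Bd n) : ‖pt y 0‖ = ‖y‖ := by
  have h := norm_pt y 0
  nlinarith [norm_nonneg (pt y 0), norm_nonneg y]

lemma norm_pt_zero_sub (y z : Bd n) : ‖pt y 0 - pt z 0‖ = ‖y - z‖ := by
  have h := norm_pt_sub_pt y z 0 0
  simp only [sub_self] at h
  nlinarith [norm_nonneg (pt y 0 - pt z 0), norm_nonneg (y - z)]

lemma norm_pt_le (y : Bd n) (t : ℝ) (ht : 0 ≤ t) : ‖pt y t‖ ≤ ‖y‖ + t := by
  have h1 : pt y t = pt y 0 + t • eN n := pt_eq_add y t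
  rw [h1]
  calc ‖pt y 0 + t • eN n‖ ≤ ‖pt y 0‖ + ‖t • eN n‖ := norm_add_le _ _
    _ = ‖y‖ + t := by
        rw [norm_pt_zero, norm_smul]
        unfold eN
        rw [EuclideanSpace.norm_single]
        simp [abs_of_nonneg ht]

lemma norm_pt_sub_le (y z : Bd n) (t : ℝ) (ht : 0 ≤ t) :
    ‖pt y t - pt z 0‖ ≤ ‖y - z‖ + t := by
  calc ‖pt y t - pt z 0‖ ≤ ‖pt y t - pt y 0‖ + ‖pt y 0 - pt z 0‖ := by
        have := norm_sub_le_norm_sub_add_norm_sub (pt y t) (pt y 0) (pt z 0)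
        exact this
    _ = ‖y - z‖ + t := by
        rw [norm_pt_sub_pt_self, norm_pt_zero_sub]
        simp [abs_of_nonneg ht]
        ring

end Glue
section HalfBall

variable {n : ℕ}

lemma xN_add (u v : Pt n) : xN (u + v) = xN u + xN v := by
  unfold xN; rw [PiLp.add_apply]

lemma xN_sub (u v : Pt n) : xN (u - v) = xN u - xN v := by
  unfold xN; rw [PiLp.sub_apply]

lemma xN_smul (s : ℝ) (v : Pt n) : xN (s • v) = s * xN v := by
  unfold xN; rw [PiLp.smul_apply]; rfl

lemma xN_eN : xN (eN n) = 1 := by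
  unfold xN eN; rw [EuclideanSpace.single_apply]; simp

lemma isOpen_hb (x₀ : Bd n) (R : ℝ) : IsOpen (hb x₀ R) := by
  have h1 : hb x₀ R = {x | 0 < xN x} ∩ {x : Pt n | ‖x - pt x₀ 0‖ < R} := rfl
  rw [h1]
  exact (isOpen_lt continuous_const continuous_xN).inter
    (isOpen_lt (continuous_id.sub continuous_const).norm continuous_const)

lemma closure_hb_subset (x₀ : Bd n) (R : ℝ) :
    closure (hb x₀ R) ⊆ {x | 0 ≤ xN x ∧ ‖x - pt x₀ 0‖ ≤ R} := by
  apply closure_minimal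
  · intro x hx; exact ⟨hx.1.le, hx.2.le⟩
  · show IsClosed ({x : Pt n | 0 ≤ xN x} ∩ {x : Pt n | ‖x - pt x₀ 0‖ ≤ R})
    exact (isClosed_le continuous_const continuous_xN).inter
      (isClosed_le (continuous_id.sub continuous_const).norm continuous_const)

lemma isCompact_closure_hb (x₀ : Bd n) (R : ℝ) : IsCompact (closure (hb x₀ R)) := by
  have hsub : closure (hb x₀ R) ⊆ Metric.closedBall (pt x₀ 0) R := by
    apply closure_minimal
    · intro x hx
      rw [Metric.mem_closedBall, dist_eq_norm]
      exact hx.2.le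
    · exact Metric.isClosed_closedBall
  exact (isCompact_closedBall _ _).of_isClosed_subset isClosed_closure hsub

lemma sb_subset_closure {x₀ : Bd n} {R : ℝ} : sb x₀ R ⊆ closure (hb x₀ R) := by
  intro z hz
  set cc : Pt n := pt x₀ 0 with hcc
  have hc0 : xN cc = 0 := xN_pt x₀ 0
  have htend : Tendsto (fun s : ℝ => cc + s • (z - cc)) (𝓝[<] 1) (𝓝 z) := by
    have hc : Continuous (fun s : ℝ => cc + s • (z - cc)) :=
      continuous_const.add (continuous_id.smul continuous_const)
    have h1 : cc + (1 : ℝ) • (z - cc) = z := by simp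
    have := hc.tendsto 1
    rw [h1] at this
    exact this.mono_left nhdsWithin_le_nhds
  apply mem_closure_of_tendsto htend
  filter_upwards [Ioo_mem_nhdsLT_of_mem (show (1:ℝ) ∈ Ioc (0:ℝ) 1 from ⟨zero_lt_one, le_refl _⟩)]
    with s hs
  constructor
  · show 0 < xN (cc + s • (z - cc))
    rw [xN_add, xN_smul, xN_sub, hc0]
    have := hz.1
    have hs1 := hs.1
    simp only [sub_zero]
    positivity
  · show ‖cc + s • (z - cc) - cc‖ < R
    have h2 : cc + s • (z - cc) - cc = s • (z - cc) := by abel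
    rw [h2, norm_smul, hz.2]
    have hzcc : z ≠ cc := by
      intro h
      have h3 := hz.1
      rw [h, hc0] at h3
      exact lt_irrefl 0 h3
    have hR : 0 < R := by
      rw [← hz.2]
      exact norm_pos_iff.2 (sub_ne_zero.2 hzcc)
    calc |s| * R = s * R := by rw [abs_of_pos hs.1]
      _ < 1 * R := mul_lt_mul_of_pos_right hs.2 hR
      _ = R := one_mul R

lemma sphere_mem_closure_sb {x₀ : Bd n} {R : ℝ} (hR : 0 < R) {x : Pt n} (hx0 : 0 ≤ xN x)
    (hxR : ‖x - pt x₀ 0‖ = R) : x ∈ closure (sb x₀ R) := by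
  rcases lt_or_eq_of_le hx0 with hpos | hzero
  · exact subset_closure ⟨hpos, hxR⟩
  · -- corner point, approximate by rotating into the sphere
    set cc : Pt n := pt x₀ 0 with hcc
    set v : Pt n := x - cc with hv
    have hc0 : xN cc = 0 := xN_pt x₀ 0
    have hvN : xN v = 0 := by rw [hv, xN_sub, ← hzero, hc0]; ring
    have hinner : inner ℝ v (eN n) = (0 : ℝ) := inner_eN_of_xN_zero hvN
    set w : ℝ → Pt n := fun θ => cc + Real.sqrt (1 - θ ^ 2) • v + (R * θ) • eN n with hw
    have htend : Tendsto w (𝓝[>] 0) (𝓝 x) := by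
      have hc : Continuous w := by
        apply Continuous.add
        · exact continuous_const.add
            (((Real.continuous_sqrt.comp (by continuity)).smul continuous_const))
        · exact (continuous_const.mul continuous_id).smul continuous_const
      have h1 : w 0 = x := by
        rw [hw]
        simp [hv]
      have := hc.tendsto 0
      rw [h1] at this
      exact this.mono_left nhdsWithin_le_nhds
    apply mem_closure_of_tendsto htend
    filter_upwards [Ioo_mem_nhdsGT_of_mem
      (show (0:ℝ) ∈ Ico (0:ℝ) 1 from ⟨le_refl _, zero_lt_one⟩)] with θ hθ
    have hθ0 : 0 < θ := hθ.1
    have hθ1 : θ < 1 := hθ.2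
    have hsq : 0 ≤ 1 - θ ^ 2 := by nlinarith
    constructor
    · show 0 < xN (w θ)
      rw [hw]
      show 0 < xN (cc + Real.sqrt (1 - θ ^ 2) • v + (R * θ) • eN n)
      rw [xN_add, xN_add, xN_smul, xN_smul, hc0, hvN, xN_eN]
      have : 0 < R * θ := by positivity
      linarith
    · show ‖w θ - cc‖ = R
      have h2 : w θ - cc = Real.sqrt (1 - θ ^ 2) • v + (R * θ) • eN n := by
        rw [hw]; simp only [add_assoc, add_sub_cancel_left]
      rw [h2]
      have h3 : ‖Real.sqrt (1 - θ ^ 2) • v + (R * θ) • eN n‖ ^ 2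
          = ‖Real.sqrt (1 - θ ^ 2) • v‖ ^ 2 + 2 * inner ℝ (Real.sqrt (1 - θ ^ 2) • v) ((R * θ) • eN n)
            + ‖(R * θ) • eN n‖ ^ 2 := norm_add_sq_real _ _
      have h4 : inner ℝ (Real.sqrt (1 - θ ^ 2) • v) ((R * θ) • eN n) = (0 : ℝ) := by
        rw [real_inner_smul_left, real_inner_smul_right, hinner]
        ring
      have hvR : ‖v‖ = R := hxR
      have h5 : ‖Real.sqrt (1 - θ ^ 2) • v‖ ^ 2 = (1 - θ ^ 2) * R ^ 2 := by
        rw [norm_smul, hvR, mul_pow, Real.norm_eq_abs, sq_abs, Real.sq_sqrt hsq]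
      have h6 : ‖(R * θ) • eN n‖ ^ 2 = R ^ 2 * θ ^ 2 := by
        rw [norm_smul]
        unfold eN
        rw [EuclideanSpace.norm_single]
        simp only [norm_one, mul_one]
        rw [Real.norm_eq_abs, sq_abs, mul_pow]
      have h7 : ‖Real.sqrt (1 - θ ^ 2) • v + (R * θ) • eN n‖ ^ 2 = R ^ 2 := by
        rw [h3, h4, h5, h6]; ring
      nlinarith [norm_nonneg (Real.sqrt (1 - θ ^ 2) • v + (R * θ) • eN n)]

lemma nonneg_on_closure {f : Pt n → ℝ} {s : Set (Pt n)} (hf : ContinuousOn f (closure s))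
    (h : ∀ y ∈ s, 0 ≤ f y) : ∀ x ∈ closure s, 0 ≤ f x := by
  intro x hx
  have h1 : ContinuousWithinAt f (closure s) x := hf x hx
  have h2 : Tendsto f (𝓝[s] x) (𝓝 (f x)) :=
    h1.tendsto.mono_left (nhdsWithin_mono x subset_closure)
  haveI h3 : (𝓝[s] x).NeBot := mem_closure_iff_nhdsWithin_neBot.1 hx
  exact ge_of_tendsto h2 (eventually_nhdsWithin_of_forall h)

end HalfBall
section Core

variable {n : ℕ}

set_option maxHeartbeats 4000000 in
lemma core {γ : ℝ} (hγ0 : 0 < γ) (hγ1 : γ < 1)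
    {K Ω : Set (Pt n)} (hKcomp : IsCompact K) (hKH : K ⊆ Hcl n)
    (hΩo : IsOpen Ω) (hΩK : Ω ⊆ K) (hΩH : Ω ⊆ H n)
    {F : Set (Bd n)} {A : Pt n → ℝ} {a : Bd n → ℝ}
    {U V UN VN : Pt n → ℝ}
    (hUc : ContinuousOn U K) (hVc : ContinuousOn V K)
    (hUNc : ContinuousOn UN K) (hVNc : ContinuousOn VN K)
    (hVpos : ∀ x ∈ K, 0 < V x)
    (hU2 : ∀ x ∈ Ω, ContDiffAt ℝ 2 U x) (hV2 : ∀ x ∈ Ω, ContDiffAt ℝ 2 V x)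
    (hUN : ∀ x ∈ Ω, UN x = wt γ x * pdN U x) (hVN : ∀ x ∈ Ω, VN x = wt γ x * pdN V x)
    (hsupU : ∀ x ∈ Ω, xN x * lap U x + (1 - 2 * γ) * pdN U x - xN x * A x * U x ≤ 0)
    (hsupV : ∀ x ∈ Ω, xN x * lap V x + (1 - 2 * γ) * pdN V x - xN x * A x * V x ≤ 0)
    (hbnU : ∀ y ∈ F, 0 ≤ -kap γ * UN (pt y 0) + a y * U (pt y 0))
    (hbnV : ∀ y ∈ F, 0 ≤ -kap γ * VN (pt y 0) + a y * V (pt y 0))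
    (hseg : ∀ y ∈ F, ∃ τ > 0, ∀ t ∈ Ioc (0 : ℝ) τ, pt y t ∈ Ω)
    {η : ℝ} (hη : 0 ≤ η)
    (hsplit : ∀ x ∈ K, x ∈ Ω ∨ (∃ y ∈ F, x = pt y 0) ∨ -(η * V x) ≤ U x)
    {xh : Pt n} (hxhK : xh ∈ K) (hxh1 : U xh < 0) (hxh2 : U xh ≤ -(2 * η * V xh)) :
    False := by
  have hκ : 0 < kap γ := kap_pos hγ0 hγ1
  have hKne : K.Nonempty := ⟨xh, hxhK⟩
  -- minimum of V
  obtain ⟨zV, hzVK, hzVmin⟩ := hKcomp.exists_isMinOn hKne hVc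
  have hv0pos : 0 < V zV := hVpos zV hzVK
  have hv0le : ∀ x ∈ K, V zV ≤ V x := fun x hx => hzVmin hx
  -- bound on VN
  obtain ⟨Sv0, hSv0⟩ := hKcomp.exists_bound_of_continuousOn hVNc
  set Sv : ℝ := max Sv0 0 with hSvdef
  have hSv : ∀ x ∈ K, |VN x| ≤ Sv := fun x hx =>
    le_trans (by simpa [Real.norm_eq_abs] using hSv0 x hx) (le_max_left _ _)
  have hSvnn : 0 ≤ Sv := le_max_right _ _
  set Cv : ℝ := Sv / V zV with hCvdef
  have hCv : 0 ≤ Cv := div_nonneg hSvnn hv0pos.le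
  have hCvV : ∀ x ∈ K, Sv ≤ Cv * V x := by
    intro x hx
    rw [hCvdef, div_mul_eq_mul_div, le_div_iff₀ hv0pos]
    have := hv0le x hx
    nlinarith
  set c : ℝ := 2 * γ with hcdef
  have hcpos : 0 < c := by rw [hcdef]; linarith
  set Kc : ℝ := (2 * Cv + 2) / c with hKcdef
  have hKcpos : 0 < Kc := by rw [hKcdef]; positivity
  have hKcc : Kc * c = 2 * Cv + 2 := by
    rw [hKcdef, div_mul_cancel₀ _ (ne_of_gt hcpos)]
  -- bound on xN over K
  obtain ⟨RN0, hRN0⟩ := hKcomp.exists_bound_of_continuousOn (continuous_xN.continuousOn)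
  set RN : ℝ := max RN0 0 with hRNdef
  have hxNK : ∀ x ∈ K, xN x ≤ RN := fun x hx =>
    le_trans (le_trans (le_abs_self _) (by simpa [Real.norm_eq_abs] using hRN0 x hx))
      (le_max_left _ _)
  have hxNK0 : ∀ x ∈ K, 0 ≤ xN x := fun x hx => hKH hx
  set Bh : ℝ := Real.exp (Kc * RN ^ c) with hBhdef
  have hbar_mem : ∀ x ∈ K, 1 ≤ bar Kc c x ∧ bar Kc c x ≤ Bh := fun x hx =>
    ⟨one_le_bar hKcpos.le (hxNK0 x hx), bar_le hKcpos.le hcpos.le (hxNK0 x hx) (hxNK x hx)⟩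
  have hBh1 : 1 ≤ Bh := le_trans (hbar_mem xh hxhK).1 (hbar_mem xh hxhK).2
  -- W : quotient, and its min
  set W : Pt n → ℝ := fun x => U x / V x with hWdef
  have hWc : ContinuousOn W K := hUc.div hVc (fun x hx => (hVpos x hx).ne')
  obtain ⟨xm, hxmK, hxmmin⟩ := hKcomp.exists_isMinOn hKne hWc
  set m : ℝ := W xm with hmdef
  have hmle : ∀ x ∈ K, m ≤ W x := fun x hx => hxmmin hx
  have hWxh : W xh ≤ -(2 * η) := by
    rw [hWdef]
    rw [div_le_iff₀ (hVpos _ hxhK)]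
    nlinarith [hVpos _ hxhK]
  have hm2η : m ≤ -(2 * η) := le_trans (hmle xh hxhK) hWxh
  have hmneg : m < 0 :=
    lt_of_le_of_lt (hmle xh hxhK) (div_neg_of_neg_of_pos hxh1 (hVpos _ hxhK))
  set ε : ℝ := -m / (4 * Bh) with hεdef
  have hεpos : 0 < ε := by
    rw [hεdef]
    apply div_pos (by linarith) (by linarith)
  have hεBh : ε * Bh = -m / 4 := by
    rw [hεdef]
    field_simp
  -- perturbed function and its min
  set Wt : Pt n → ℝ := fun x => W x - ε * bar Kc c x with hWtdef
  have hWtc : ContinuousOn Wt K :=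
    hWc.sub (continuousOn_const.mul (continuous_bar Kc c hcpos).continuousOn)
  obtain ⟨xs, hxsK, hxsmin⟩ := hKcomp.exists_isMinOn hKne hWtc
  have hWtmin : ∀ x ∈ K, Wt xs ≤ Wt x := fun x hx => hxsmin hx
  have hWtle : Wt xs ≤ m - ε := by
    have h1 := hWtmin xm hxmK
    have h2 : ε * 1 ≤ ε * bar Kc c xm :=
      mul_le_mul_of_nonneg_left (hbar_mem xm hxmK).1 hεpos.le
    have h3 : Wt xm = m - ε * bar Kc c xm := rfl
    rw [h3] at h1
    linarith
  have hWxs : W xs ≤ 3 / 4 * m := by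
    have h1 : W xs = Wt xs + ε * bar Kc c xs := by rw [hWtdef]; ring
    have h2 : ε * bar Kc c xs ≤ ε * Bh :=
      mul_le_mul_of_nonneg_left (hbar_mem xs hxsK).2 hεpos.le
    rw [hεBh] at h2
    linarith
  have hWxsneg : W xs < 0 := by linarith
  have hVxs : 0 < V xs := hVpos xs hxsK
  have hUxsneg : U xs < 0 := by
    by_contra h
    push_neg at h
    have : 0 ≤ W xs := div_nonneg h hVxs.le
    linarith
  rcases hsplit xs hxsK with hin | ⟨y, hyF, hxy⟩ | hbd
  · -- interior case
    have htpos : 0 < xN xs := hΩH hin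
    set t : ℝ := xN xs with ht
    have hU2s : ContDiffAt ℝ 2 U xs := hU2 xs hin
    have hV2s : ContDiffAt ℝ 2 V xs := hV2 xs hin
    have hW2 : ContDiffAt ℝ 2 W xs := hU2s.div hV2s (ne_of_gt hVxs)
    have hbar2 : ContDiffAt ℝ 2 (bar Kc c) xs := contDiffAt_bar (ne_of_gt htpos)
    have hWt2 : ContDiffAt ℝ 2 Wt xs := hW2.sub (contDiffAt_const.mul hbar2)
    have hKnhds : K ∈ 𝓝 xs := Filter.mem_of_superset (hΩo.mem_nhds hin) hΩK
    have hmin' : IsLocalMin Wt xs := hxsmin.isLocalMin hKnhds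
    have hWtd : fderiv ℝ Wt xs = 0 := hmin'.fderiv_eq_zero
    have hdW : DifferentiableAt ℝ W xs := hW2.differentiableAt two_ne_zero
    have hdbar : DifferentiableAt ℝ (bar Kc c) xs := hbar2.differentiableAt two_ne_zero
    have hpdW : ∀ α, pd α W xs = ε * pd α (bar Kc c) xs := by
      intro α
      have h1 : pd α Wt xs = pd α W xs - ε * pd α (bar Kc c) xs :=
        pd_sub_const_mul ε hdW hdbar α
      have h2 : pd α Wt xs = 0 := by unfold pd; rw [hWtd]; rfl
      linarith
    have hpdpdW : ∀ α, ε * pd α (pd α (bar Kc c)) xs ≤ pd α (pd α W) xs := by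
      intro α
      have h1 : pd α (pd α Wt) xs = pd α (pd α W) xs - ε * pd α (pd α (bar Kc c)) xs :=
        pdpd_sub_const_mul ε hW2 hbar2 α
      have h2 : 0 ≤ pd α (pd α Wt) xs := pdpd_nonneg_of_isLocalMin hWt2 hmin' α
      linarith
    -- U = W * V near xs
    have hVne : ∀ᶠ y in 𝓝 xs, V y ≠ 0 := hV2s.continuousAt.eventually_ne (ne_of_gt hVxs)
    have hUev : U =ᶠ[𝓝 xs] fun y => W y * V y := by
      filter_upwards [hVne] with y hy
      show U y = U y / V y * V y
      rw [div_mul_cancel₀ _ hy]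
    have hdV : DifferentiableAt ℝ V xs := hV2s.differentiableAt two_ne_zero
    have hpdU : ∀ α, pd α U xs = W xs * pd α V xs + V xs * pd α W xs := by
      intro α
      rw [pd_congr_nhds hUev α, pd_mul hdW hdV α]
    have hpdpdU : ∀ α, pd α (pd α U) xs =
        W xs * pd α (pd α V) xs + 2 * pd α W xs * pd α V xs + V xs * pd α (pd α W) xs := by
      intro α
      have hev2 : pd α U =ᶠ[𝓝 xs] pd α (fun y => W y * V y) := by
        have h3 : ∀ᶠ y in 𝓝 xs, U =ᶠ[𝓝 y] fun z => W z * V z := hUev.eventually_nhds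
        filter_upwards [h3] with y hy
        exact pd_congr_nhds hy α
      rw [pd_congr_nhds hev2 α, pdpd_mul hW2 hV2s α]
    set E : ℝ := Real.exp (Kc * t ^ c) with hEdef
    set b1 : ℝ := barD1 Kc c t with hb1def
    set b2 : ℝ := barD2 Kc c t with hb2def
    have hpdbar : ∀ α, pd α (bar Kc c) xs = b1 * (if α = Fin.last n then 1 else 0) :=
      fun α => pd_bar (ne_of_gt htpos) α
    have hEpos : 0 < E := Real.exp_pos _
    have htc1 : (0 : ℝ) < t ^ (c - 1) := Real.rpow_pos_of_pos htpos _
    have htc : (0 : ℝ) < t ^ c := Real.rpow_pos_of_pos htpos _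
    have hb1pos : 0 < b1 := by
      rw [hb1def]
      unfold barD1
      exact mul_pos (mul_pos (mul_pos hKcpos hcpos) htc1) (Real.exp_pos _)
    have hpdNW : pdN W xs = ε * b1 := by
      have := hpdW (Fin.last n)
      rw [hpdbar (Fin.last n), if_pos rfl, mul_one] at this
      exact this
    have hpdNU : pdN U xs = W xs * pdN V xs + V xs * (ε * b1) := by
      show pd (Fin.last n) U xs = W xs * pd (Fin.last n) V xs + V xs * (ε * b1)
      rw [hpdU (Fin.last n)]
      have h4 : pd (Fin.last n) W xs = ε * b1 := hpdNW
      rw [h4]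
    have hu : U xs = W xs * V xs := by
      show U xs = U xs / V xs * V xs
      rw [div_mul_cancel₀ _ (ne_of_gt hVxs)]
    -- sums
    have hSbar : ∑ α, pd α (pd α (bar Kc c)) xs = b2 := by
      have h1 : ∀ α, pd α (pd α (bar Kc c)) xs = b2 * (if α = Fin.last n then 1 else 0) :=
        fun α => pdpd_bar htpos α
      rw [Finset.sum_congr rfl (fun α _ => h1 α)]
      simp
    have hlapW : ε * b2 ≤ lap W xs := by
      unfold lap
      calc ε * b2 = ∑ α, ε * pd α (pd α (bar Kc c)) xs := by rw [← Finset.mul_sum, hSbar]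
        _ ≤ ∑ α, pd α (pd α W) xs := Finset.sum_le_sum (fun α _ => hpdpdW α)
    have hmid : ∑ α, 2 * pd α W xs * pd α V xs = 2 * (ε * b1) * pdN V xs := by
      have h1 : ∀ α, 2 * pd α W xs * pd α V xs =
          (if α = Fin.last n then 2 * (ε * b1) * pdN V xs else 0) := by
        intro α
        rw [hpdW α, hpdbar α]
        by_cases hα : α = Fin.last n
        · rw [if_pos hα, if_pos hα, hα]
          show 2 * (ε * (b1 * 1)) * pd (Fin.last n) V xs = 2 * (ε * b1) * pd (Fin.last n) V xs
          ring
        · rw [if_neg hα, if_neg hα]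
          ring
      rw [Finset.sum_congr rfl (fun α _ => h1 α), Finset.sum_ite_eq' Finset.univ]
      simp
    have hlapU : lap U xs = W xs * lap V xs + 2 * (ε * b1) * pdN V xs + V xs * lap W xs := by
      unfold lap
      rw [Finset.sum_congr rfl (fun α _ => hpdpdU α)]
      rw [Finset.sum_add_distrib, Finset.sum_add_distrib, ← Finset.mul_sum, ← Finset.mul_sum,
        hmid]
    -- the weighted vertical derivative of V
    have hVNs : VN xs = t ^ (1 - c) * pdN V xs := by
      have := hVN xs hin
      rw [this]
      rfl
    have htPV : t * pdN V xs = t ^ c * VN xs := by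
      rw [hVNs]
      rw [← mul_assoc, ← Real.rpow_add htpos]
      norm_num
    have hVNlow : -(Cv * V xs) ≤ VN xs := by
      have h1 := hSv xs hxsK
      have h2 := hCvV xs hxsK
      have := abs_le.1 h1
      linarith [this.1]
    -- assemble
    have hsU := hsupU xs hin
    have hsV := hsupV xs hin
    rw [← ht] at hsU hsV
    have hexp : t * lap U xs + (1 - c) * pdN U xs - t * A xs * U xs
        = W xs * (t * lap V xs + (1 - c) * pdN V xs - t * A xs * V xs)
          + 2 * (ε * b1) * (t * pdN V xs) + V xs * (t * lap W xs)
          + (1 - c) * (ε * b1) * V xs := by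
      rw [hlapU, hpdNU, hu]
      ring
    have h9 : 0 ≤ W xs * (t * lap V xs + (1 - c) * pdN V xs - t * A xs * V xs) := by
      have h1 := mul_nonneg (neg_nonneg.2 hWxsneg.le) (neg_nonneg.2 hsV)
      calc (0:ℝ) ≤ -W xs * -(t * lap V xs + (1 - c) * pdN V xs - t * A xs * V xs) := h1
        _ = W xs * (t * lap V xs + (1 - c) * pdN V xs - t * A xs * V xs) := by ring
    have h10 : ε * V xs * (t * b2) ≤ V xs * (t * lap W xs) := by
      have h1 : t * (ε * b2) ≤ t * lap W xs := mul_le_mul_of_nonneg_left hlapW htpos.le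
      have h2 : V xs * (t * (ε * b2)) ≤ V xs * (t * lap W xs) :=
        mul_le_mul_of_nonneg_left h1 hVxs.le
      calc ε * V xs * (t * b2) = V xs * (t * (ε * b2)) := by ring
        _ ≤ V xs * (t * lap W xs) := h2
    have h11 : 2 * (ε * b1) * (t ^ c * (-(Cv * V xs))) ≤ 2 * (ε * b1) * (t * pdN V xs) := by
      rw [htPV]
      have hf : 0 ≤ 2 * (ε * b1) := by positivity
      apply mul_le_mul_of_nonneg_left ?_ hf
      exact mul_le_mul_of_nonneg_left hVNlow htc.le
    -- positivity of the bracket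
    have e1 : t ^ (c - 1) = t ^ (c - 2) * t := by
      have h1' : t ^ (c - 2 + 1) = t ^ (c - 2) * t := by
        rw [Real.rpow_add htpos, Real.rpow_one]
      have hcc1 : c - 2 + 1 = c - 1 := by ring
      rw [hcc1] at h1'
      exact h1'
    have e2 : t ^ c = t ^ (c - 2) * t * t := by
      have h1' : t ^ (c - 2 + 1 + 1) = t ^ (c - 2) * t * t := by
        rw [Real.rpow_add htpos, Real.rpow_add htpos, Real.rpow_one]
      have hcc1 : c - 2 + 1 + 1 = c := by ring
      rw [hcc1] at h1'
      exact h1'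
    have hP : (0 : ℝ) < t ^ (c - 2) := Real.rpow_pos_of_pos htpos _
    have hbracket : ε * V xs * (t * b2) + (1 - c) * (ε * b1) * V xs
        + 2 * (ε * b1) * (t ^ c * (-(Cv * V xs)))
        = ε * V xs * (Kc * c * (Kc * c - 2 * Cv) * (t * t * t) * (t ^ (c - 2) * t ^ (c - 2)) * E) := by
      rw [hb1def, hb2def]
      unfold barD1 barD2
      rw [← hEdef, e1, e2]
      ring
    have hbrpos : 0 < ε * V xs *
        (Kc * c * (Kc * c - 2 * Cv) * (t * t * t) * (t ^ (c - 2) * t ^ (c - 2)) * E) := by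
      have h2' : Kc * c - 2 * Cv = 2 := by rw [hKcc]; ring
      rw [h2']
      positivity
    linarith [hsU, hexp, h9, h10, h11, hbracket, hbrpos]
  · -- flat boundary case
    obtain ⟨τ, hτpos, hτ⟩ := hseg y hyF
    have hxN0 : xN xs = 0 := by rw [hxy, xN_pt]
    have h1 := hbnU y hyF
    have h2 := hbnV y hyF
    rw [← hxy] at h1 h2
    have hnum : V xs * UN xs - U xs * VN xs ≤ 0 := by
      have e1 : 0 ≤ V xs * (-kap γ * UN xs + a y * U xs) := mul_nonneg hVxs.le h1
      have e2 : U xs * (-kap γ * VN xs + a y * V xs) ≤ 0 :=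
        mul_nonpos_of_nonpos_of_nonneg hUxsneg.le h2
      have e3 : kap γ * (V xs * UN xs - U xs * VN xs)
          = U xs * (-kap γ * VN xs + a y * V xs) - V xs * (-kap γ * UN xs + a y * U xs) := by
        ring
      have e4 : kap γ * (V xs * UN xs - U xs * VN xs) ≤ 0 := by rw [e3]; linarith
      by_contra hcon
      push_neg at hcon
      have e5 : 0 < kap γ * (V xs * UN xs - U xs * VN xs) := mul_pos hκ hcon
      linarith
    set Φ : Pt n → ℝ := fun x => (V x * UN x - U x * VN x) / V x ^ 2
        - ε * (Kc * c * Real.exp (Kc * xN x ^ c)) with hΦdef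
    have hΦc : ContinuousOn Φ K := by
      apply ContinuousOn.sub
      · apply ContinuousOn.div ((hVc.mul hUNc).sub (hUc.mul hVNc)) (hVc.pow 2)
        intro x hx
        exact pow_ne_zero _ (ne_of_gt (hVpos x hx))
      · exact continuousOn_const.mul (continuousOn_const.mul
          (continuous_bar Kc c hcpos).continuousOn)
    have hΦxs : Φ xs ≤ -(ε * (Kc * c)) := by
      have hV2' : (0 : ℝ) < V xs ^ 2 := by positivity
      have h5 : (V xs * UN xs - U xs * VN xs) / V xs ^ 2 ≤ 0 :=
        div_nonpos_of_nonpos_of_nonneg hnum hV2'.le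
      have h6 : xN xs ^ c = 0 := by rw [hxN0]; exact Real.zero_rpow (ne_of_gt hcpos)
      show (V xs * UN xs - U xs * VN xs) / V xs ^ 2
          - ε * (Kc * c * Real.exp (Kc * xN xs ^ c)) ≤ -(ε * (Kc * c))
      rw [h6, mul_zero, Real.exp_zero, mul_one]
      linarith
    have hΦneg : Φ xs < 0 := by
      have := mul_pos hεpos (mul_pos hKcpos hcpos)
      linarith
    -- the key identity on Ω
    have hkey : ∀ x ∈ Ω, wt γ x * pdN Wt x = Φ x := by
      intro x hxΩ
      have hxpos : 0 < xN x := hΩH hxΩ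
      have hVx : 0 < V x := hVpos x (hΩK hxΩ)
      have hU2x := hU2 x hxΩ
      have hV2x := hV2 x hxΩ
      have hdWx : DifferentiableAt ℝ W x :=
        (hU2x.div hV2x (ne_of_gt hVx)).differentiableAt two_ne_zero
      have hdVx : DifferentiableAt ℝ V x := hV2x.differentiableAt two_ne_zero
      have hdbarx : DifferentiableAt ℝ (bar Kc c) x :=
        (contDiffAt_bar (ne_of_gt hxpos)).differentiableAt two_ne_zero
      have hUevx : U =ᶠ[𝓝 x] fun z => W z * V z := by
        filter_upwards [hV2x.continuousAt.eventually_ne (ne_of_gt hVx)] with z hz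
        show U z = U z / V z * V z
        rw [div_mul_cancel₀ _ hz]
      have hpdUx : pdN U x = W x * pdN V x + V x * pdN W x := by
        show pd (Fin.last n) U x
            = W x * pd (Fin.last n) V x + V x * pd (Fin.last n) W x
        rw [pd_congr_nhds hUevx _, pd_mul hdWx hdVx _]
      have hpdWtx : pdN Wt x = pdN W x - ε * pdN (bar Kc c) x :=
        pd_sub_const_mul ε hdWx hdbarx _
      have hbarx : pdN (bar Kc c) x = barD1 Kc c (xN x) := by
        have h7 := pd_bar (Kc := Kc) (c := c) (ne_of_gt hxpos) (Fin.last n)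
        rw [if_pos rfl, mul_one] at h7
        exact h7
      have hw : wt γ x = xN x ^ (1 - c) := by rw [hcdef]; rfl
      have hUNx := hUN x hxΩ
      have hVNx := hVN x hxΩ
      have hWVx : U x = W x * V x := by
        show U x = U x / V x * V x
        rw [div_mul_cancel₀ _ (ne_of_gt hVx)]
      have hpdNWx : (V x * UN x - U x * VN x) / V x ^ 2 = xN x ^ (1 - c) * pdN W x := by
        rw [hUNx, hVNx, hpdUx, hw]
        rw [hWVx]
        field_simp
        ring
      have hone : xN x ^ (1 - c) * xN x ^ (c - 1) = 1 := by
        rw [← Real.rpow_add hxpos]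
        norm_num
      have hwbar : xN x ^ (1 - c) * barD1 Kc c (xN x) = Kc * c * Real.exp (Kc * xN x ^ c) := by
        unfold barD1
        calc xN x ^ (1 - c) * (Kc * c * xN x ^ (c - 1) * Real.exp (Kc * xN x ^ c))
            = (xN x ^ (1 - c) * xN x ^ (c - 1)) * (Kc * c * Real.exp (Kc * xN x ^ c)) := by
              ring
          _ = Kc * c * Real.exp (Kc * xN x ^ c) := by rw [hone, one_mul]
      show wt γ x * pdN Wt x = (V x * UN x - U x * VN x) / V x ^ 2
          - ε * (Kc * c * Real.exp (Kc * xN x ^ c))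
      rw [hpdWtx, hw, mul_sub, hpdNWx, hbarx]
      rw [show xN x ^ (1 - c) * (ε * barD1 Kc c (xN x))
          = ε * (xN x ^ (1 - c) * barD1 Kc c (xN x)) by ring, hwbar]
    -- the vertical curve
    have hcurve : ∀ s : ℝ, HasDerivAt (fun r : ℝ => pt y r) (eN n) s := by
      intro s
      have hfn : (fun r : ℝ => pt y r) = fun r : ℝ => pt y 0 + r • eN n := by
        funext r; exact pt_eq_add y r
      rw [hfn]
      simpa using ((hasDerivAt_id s).smul_const (eN n)).const_add (pt y 0)
    have hG' : ∀ s ∈ Ioc (0 : ℝ) τ, HasDerivAt (fun r : ℝ => Wt (pt y r)) (pdN Wt (pt y s)) s := by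
      intro s hs
      have hsΩ := hτ s hs
      have hxpos : 0 < xN (pt y s) := by rw [xN_pt]; exact hs.1
      have hdWt : DifferentiableAt ℝ Wt (pt y s) := by
        apply DifferentiableAt.sub
        · exact ((hU2 _ hsΩ).div (hV2 _ hsΩ)
            (ne_of_gt (hVpos _ (hΩK hsΩ)))).differentiableAt two_ne_zero
        · exact (contDiffAt_const.mul (contDiffAt_bar (ne_of_gt hxpos))).differentiableAt
            two_ne_zero
      have h8 := hdWt.hasFDerivAt.comp_hasDerivAt s (hcurve s)
      exact h8
    -- eventual negativity
    have hcont1 : ContinuousWithinAt Φ K xs := hΦc xs hxsK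
    have htends : Tendsto (fun s : ℝ => pt y s) (𝓝[>] 0) (𝓝[K] xs) := by
      apply tendsto_nhdsWithin_of_tendsto_nhds_of_eventually_within
      · have hc := (continuous_pt y).tendsto 0
        rw [hxy]
        exact hc.mono_left nhdsWithin_le_nhds
      · filter_upwards [Ioc_mem_nhdsGT_of_mem (Set.left_mem_Ico.2 hτpos)] with s hs
        exact hΩK (hτ s hs)
    have hΦtends : Tendsto (fun s : ℝ => Φ (pt y s)) (𝓝[>] 0) (𝓝 (Φ xs)) :=
      hcont1.tendsto.comp htends
    have hnegev : ∀ᶠ s in 𝓝[>] (0 : ℝ), Φ (pt y s) < 0 ∧ s ≤ τ := by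
      apply Filter.Eventually.and
      · exact hΦtends.eventually (Iio_mem_nhds hΦneg)
      · filter_upwards [Ioc_mem_nhdsGT_of_mem (Set.left_mem_Ico.2 hτpos)] with s hs
        exact hs.2
    obtain ⟨δ, hδmem, hδsub⟩ := mem_nhdsGT_iff_exists_Ioo_subset.1 hnegev
    have hδpos : (0 : ℝ) < δ := hδmem
    have hpdneg : ∀ s ∈ Ioo (0 : ℝ) δ, pdN Wt (pt y s) < 0 := by
      intro s hs
      obtain ⟨hΦs, hsτ⟩ := hδsub hs
      have hsΩ := hτ s ⟨hs.1, hsτ⟩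
      have hkey' := hkey _ hsΩ
      have hwpos : 0 < wt γ (pt y s) := by
        unfold wt
        rw [xN_pt]
        exact Real.rpow_pos_of_pos hs.1 _
      by_contra hge
      push_neg at hge
      have h9 : 0 ≤ wt γ (pt y s) * pdN Wt (pt y s) := mul_nonneg hwpos.le hge
      rw [hkey'] at h9
      linarith
    set δ' : ℝ := δ / 2 with hδ'def
    have hδ'pos : 0 < δ' := by positivity
    have hδ'lt : δ' < δ := by rw [hδ'def]; linarith
    have hδ'τ : δ' ≤ τ := (hδsub ⟨hδ'pos, hδ'lt⟩).2
    have hmem : ∀ s ∈ Icc (0 : ℝ) δ', pt y s ∈ K := by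
      intro s hs
      rcases eq_or_lt_of_le hs.1 with heq | hlt
      · rw [← heq, ← hxy]; exact hxsK
      · exact hΩK (hτ s ⟨hlt, le_trans hs.2 hδ'τ⟩)
    have hGc : ContinuousOn (fun r : ℝ => Wt (pt y r)) (Icc 0 δ') :=
      hWtc.comp (continuous_pt y).continuousOn hmem
    have hanti : StrictAntiOn (fun r : ℝ => Wt (pt y r)) (Icc 0 δ') := by
      apply strictAntiOn_of_deriv_neg (convex_Icc _ _) hGc
      intro s hs
      rw [interior_Icc] at hs
      have hsIoc : s ∈ Ioc (0 : ℝ) τ := ⟨hs.1, le_trans hs.2.le hδ'τ⟩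
      rw [(hG' s hsIoc).deriv]
      exact hpdneg s ⟨hs.1, lt_trans hs.2 hδ'lt⟩
    have hfin : Wt (pt y 0) > Wt (pt y δ') :=
      hanti ⟨le_refl _, hδ'pos.le⟩ ⟨hδ'pos.le, le_refl _⟩ hδ'pos
    have hmin2 : Wt (pt y 0) ≤ Wt (pt y δ') := by
      rw [← hxy]
      exact hWtmin _ (hΩK (hτ δ' ⟨hδ'pos, hδ'τ⟩))
    linarith
  · -- good boundary case
    have h1 : -η ≤ W xs := by
      rw [hWdef, le_div_iff₀ hVxs]
      nlinarith
    linarith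

end Core
set_option maxHeartbeats 1000000

/-- the generalized maximum principle, on half balls and on the half
space. -/
theorem stmt11 (n : ℕ) (γ : ℝ) (hγ0 : 0 < γ) (hγ1 : γ < 1) (hn : 2 * γ < (n : ℝ)) :
    -- (i) the half ball version
    (∀ (x₀ : Bd n) (R : ℝ), 0 < R →
      ∀ (A : Pt n → ℝ) (MA : ℝ), (∀ x ∈ hb x₀ R, |A x| ≤ MA) →
      ∀ (a : Bd n → ℝ) (Ma : ℝ), (∀ y ∈ fb x₀ R, |a y| ≤ Ma) →
      ∀ V VN : Pt n → ℝ,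
        ClassReg (hb x₀ R) V →
        ContinuousOn VN (closure (hb x₀ R)) →
        (∀ x ∈ hb x₀ R, VN x = wt γ x * pdN V x) →
        SuperSol γ (hb x₀ R) A V →
        (∀ x ∈ closure (hb x₀ R), 0 < V x) →
        (∀ y ∈ fb x₀ R, 0 ≤ -kap γ * VN (pt y 0) + a y * V (pt y 0)) →
      ∀ U UN : Pt n → ℝ,
        ClassReg (hb x₀ R) U →
        ContinuousOn UN (closure (hb x₀ R)) →
        (∀ x ∈ hb x₀ R, UN x = wt γ x * pdN U x) →
        SuperSol γ (hb x₀ R) A U →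
        (∀ y ∈ fb x₀ R, 0 ≤ -kap γ * UN (pt y 0) + a y * U (pt y 0)) →
        (∀ x ∈ sb x₀ R, 0 ≤ U x) →
        ∀ x ∈ closure (hb x₀ R), 0 ≤ U x) ∧
    -- (ii) the half space version
    (∀ (A : Pt n → ℝ) (MA : ℝ), (∀ x ∈ H n, |A x| ≤ MA) →
      ∀ (a : Bd n → ℝ) (Ma : ℝ), (∀ y : Bd n, |a y| ≤ Ma) →
      ∀ V VN : Pt n → ℝ,
        ClassReg (H n) V →
        ContinuousOn VN (Hcl n) →
        (∀ x ∈ H n, VN x = wt γ x * pdN V x) →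
        SuperSol γ (H n) A V →
        (∀ x ∈ Hcl n, 0 < V x) →
        (∀ y : Bd n, 0 ≤ -kap γ * VN (pt y 0) + a y * V (pt y 0)) →
      ∀ U UN : Pt n → ℝ,
        ClassReg (H n) U →
        ContinuousOn UN (Hcl n) →
        (∀ x ∈ H n, UN x = wt γ x * pdN U x) →
        SuperSol γ (H n) A U →
        (∀ y : Bd n, 0 ≤ -kap γ * UN (pt y 0) + a y * U (pt y 0)) →
        -- `|U(x)|/V(x) → 0` uniformly as `|x| → ∞`
        (∀ ε > 0, ∃ M : ℝ, ∀ x ∈ H n, M ≤ ‖x‖ → |U x| ≤ ε * V x) →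
        ∀ x ∈ Hcl n, 0 ≤ U x) := by
  constructor
  · -- (i)
    intro x₀ R hR A MA hMA a Ma hMa V VN hVreg hVNc hVNeq hVsup hVpos hVbn
      U UN hUreg hUNc hUNeq hUsup hUbn hUsb
    by_contra hcon
    push_neg at hcon
    obtain ⟨xh, hxhK, hxh⟩ := hcon
    have hKcomp : IsCompact (closure (hb x₀ R)) := isCompact_closure_hb x₀ R
    have hKH : closure (hb x₀ R) ⊆ Hcl n := fun x hx => ((closure_hb_subset x₀ R) hx).1
    have hΩo := isOpen_hb x₀ R
    have hΩK : hb x₀ R ⊆ closure (hb x₀ R) := subset_closure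
    have hΩH : hb x₀ R ⊆ H n := fun x hx => hx.1
    have hsb' : ∀ x ∈ closure (hb x₀ R), ‖x - pt x₀ 0‖ = R → 0 ≤ U x := by
      intro x hxK hxR
      have hx0 : 0 ≤ xN x := ((closure_hb_subset x₀ R) hxK).1
      have hmem := sphere_mem_closure_sb hR hx0 hxR
      have hsubK : closure (sb x₀ R) ⊆ closure (hb x₀ R) :=
        closure_minimal sb_subset_closure isClosed_closure
      exact nonneg_on_closure (hUreg.1.mono hsubK) hUsb x hmem
    have hsplit : ∀ x ∈ closure (hb x₀ R),
        x ∈ hb x₀ R ∨ (∃ y ∈ fb x₀ R, x = pt y 0) ∨ -((0 : ℝ) * V x) ≤ U x := by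
      intro x hxK
      obtain ⟨hx0, hxR⟩ := closure_hb_subset x₀ R hxK
      rcases lt_or_eq_of_le hxR with hlt | heq
      · rcases lt_or_eq_of_le hx0 with hpos | hzero
        · exact Or.inl ⟨hpos, hlt⟩
        · refine Or.inr (Or.inl ⟨bd x, ?_, pt_bd hzero.symm⟩)
          show bd x ∈ Metric.ball x₀ R
          rw [Metric.mem_ball, dist_eq_norm]
          have h5 : ‖bd x - x₀‖ = ‖x - pt x₀ 0‖ := by
            rw [← norm_pt_zero_sub (bd x) x₀, ← pt_bd hzero.symm]
          rw [h5]; exact hlt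
      · refine Or.inr (Or.inr ?_)
        simpa using hsb' x hxK heq
    have hseg : ∀ y ∈ fb x₀ R, ∃ τ > 0, ∀ t ∈ Ioc (0 : ℝ) τ, pt y t ∈ hb x₀ R := by
      intro y hy
      have hy' : ‖y - x₀‖ < R := by
        rw [← dist_eq_norm]
        exact hy
      refine ⟨(R - ‖y - x₀‖) / 2, by linarith, ?_⟩
      intro t ht
      constructor
      · show 0 < xN (pt y t); rw [xN_pt]; exact ht.1
      · calc ‖pt y t - pt x₀ 0‖ ≤ ‖y - x₀‖ + t := norm_pt_sub_le y x₀ t ht.1.le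
          _ < R := by linarith [ht.2]
    exact core hγ0 hγ1 hKcomp hKH hΩo hΩK hΩH hUreg.1 hVreg.1 hUNc hVNc hVpos
      hUreg.2.1 hVreg.2.1 hUNeq hVNeq hUsup hVsup hUbn hVbn hseg (le_refl (0 : ℝ))
      hsplit hxhK hxh (by simpa using hxh.le)
  · -- (ii)
    intro A MA hMA a Ma hMa V VN hVreg hVNc hVNeq hVsup hVpos hVbn
      U UN hUreg hUNc hUNeq hUsup hUbn hdecay
    by_contra hcon
    push_neg at hcon
    obtain ⟨x0, hx0H, hx0⟩ := hcon
    have hUc : ContinuousOn U (Hcl n) := by rw [← closure_H]; exact hUreg.1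
    have hVc : ContinuousOn V (Hcl n) := by rw [← closure_H]; exact hVreg.1
    have hVx0 : 0 < V x0 := hVpos x0 hx0H
    set η : ℝ := -(U x0 / V x0) / 2 with hηdef
    have hs : U x0 / V x0 < 0 := div_neg_of_neg_of_pos hx0 hVx0
    have hηpos : 0 < η := by rw [hηdef]; linarith
    obtain ⟨M, hM⟩ := hdecay η hηpos
    set M' : ℝ := max M ‖x0‖ + 1 with hM'def
    have hM'M : M ≤ M' := by
      have := le_max_left M ‖x0‖
      rw [hM'def]; linarith
    have hM'x0 : ‖x0‖ ≤ M' := by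
      have := le_max_right M ‖x0‖
      rw [hM'def]; linarith
    have hKcomp : IsCompact (Hcl n ∩ Metric.closedBall (0 : Pt n) M') := by
      apply Metric.isCompact_of_isClosed_isBounded
      · exact isClosed_Hcl.inter Metric.isClosed_closedBall
      · exact Metric.isBounded_closedBall.subset inter_subset_right
    have hKHsub : Hcl n ∩ Metric.closedBall (0 : Pt n) M' ⊆ Hcl n := inter_subset_left
    have hΩo : IsOpen (H n ∩ Metric.ball (0 : Pt n) M') := isOpen_H.inter Metric.isOpen_ball
    have hΩK : H n ∩ Metric.ball (0 : Pt n) M' ⊆ Hcl n ∩ Metric.closedBall (0 : Pt n) M' :=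
      fun x hx => ⟨(le_of_lt (hx.1 : 0 < xN x) : 0 ≤ xN x), Metric.ball_subset_closedBall hx.2⟩
    have hΩH : H n ∩ Metric.ball (0 : Pt n) M' ⊆ H n := inter_subset_left
    have hdecay' : ∀ x ∈ Hcl n, M ≤ ‖x‖ → -(η * V x) ≤ U x := by
      intro x hx hMx
      rcases lt_or_eq_of_le (show (0:ℝ) ≤ xN x from hx) with hpos | hzero
      · have h7 := abs_le.1 (hM x hpos hMx)
        linarith [h7.1]
      · have htend : Tendsto (fun t : ℝ => x + t • eN n) (𝓝[>] 0) (𝓝 x) := by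
          have hc : Continuous (fun t : ℝ => x + t • eN n) :=
            continuous_const.add (continuous_id.smul continuous_const)
          have h0 : x + (0 : ℝ) • eN n = x := by simp
          have h1 := hc.tendsto 0
          rw [h0] at h1
          exact h1.mono_left nhdsWithin_le_nhds
        have hinner : inner ℝ x (eN n) = (0 : ℝ) := inner_eN_of_xN_zero hzero.symm
        have hev : ∀ᶠ t in 𝓝[>] (0 : ℝ), 0 ≤ U (x + t • eN n) + η * V (x + t • eN n) := by
          filter_upwards [self_mem_nhdsWithin] with t ht
          have ht' : (0 : ℝ) < t := ht
          have htH : x + t • eN n ∈ H n := by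
            show 0 < xN (x + t • eN n)
            rw [xN_add_smul, ← hzero]
            simpa using ht'
          have hnorm : M ≤ ‖x + t • eN n‖ := by
            have h8 : ‖x + t • eN n‖ ^ 2 = ‖x‖ ^ 2 + t ^ 2 := by
              rw [norm_add_sq_real, real_inner_smul_right, hinner, norm_smul]
              unfold eN
              rw [EuclideanSpace.norm_single]
              simp only [norm_one, mul_one, mul_zero]
              rw [Real.norm_eq_abs, sq_abs]
              ring
            nlinarith [norm_nonneg (x + t • eN n), norm_nonneg x, hMx]
          have h7 := abs_le.1 (hM _ htH hnorm)
          linarith [h7.1]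
        have hUVc : ContinuousWithinAt (fun z => U z + η * V z) (Hcl n) x :=
          ((hUc x hx).add ((continuousOn_const.mul hVc) x hx))
        have htendW : Tendsto (fun t : ℝ => x + t • eN n) (𝓝[>] 0) (𝓝[Hcl n] x) := by
          apply tendsto_nhdsWithin_of_tendsto_nhds_of_eventually_within _ htend
          filter_upwards [self_mem_nhdsWithin] with t ht
          have ht' : (0 : ℝ) < t := ht
          show 0 ≤ xN (x + t • eN n)
          rw [xN_add_smul, ← hzero]
          simpa using ht'.le
        have h9 := ge_of_tendsto (hUVc.tendsto.comp htendW) hev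
        linarith
    have hsplit : ∀ x ∈ Hcl n ∩ Metric.closedBall (0 : Pt n) M',
        x ∈ H n ∩ Metric.ball (0 : Pt n) M' ∨
          (∃ y ∈ Metric.ball (0 : Bd n) M', x = pt y 0) ∨ -(η * V x) ≤ U x := by
      intro x hxK
      obtain ⟨hx0', hxB⟩ := hxK
      rw [Metric.mem_closedBall, dist_zero_right] at hxB
      rcases lt_or_eq_of_le hxB with hlt | heq
      · rcases lt_or_eq_of_le (show (0:ℝ) ≤ xN x from hx0') with hpos | hzero
        · exact Or.inl ⟨hpos, by rw [Metric.mem_ball, dist_zero_right]; exact hlt⟩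
        · refine Or.inr (Or.inl ⟨bd x, ?_, pt_bd hzero.symm⟩)
          rw [Metric.mem_ball, dist_zero_right, norm_bd hzero.symm]
          exact hlt
      · exact Or.inr (Or.inr (hdecay' x hx0' (le_trans hM'M (le_of_eq heq.symm))))
    have hseg : ∀ y ∈ Metric.ball (0 : Bd n) M',
        ∃ τ > 0, ∀ t ∈ Ioc (0 : ℝ) τ, pt y t ∈ H n ∩ Metric.ball (0 : Pt n) M' := by
      intro y hy
      rw [Metric.mem_ball, dist_zero_right] at hy
      refine ⟨(M' - ‖y‖) / 2, by linarith, fun t ht => ?_⟩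
      constructor
      · show 0 < xN (pt y t); rw [xN_pt]; exact ht.1
      · rw [Metric.mem_ball, dist_zero_right]
        calc ‖pt y t‖ ≤ ‖y‖ + t := norm_pt_le y t ht.1.le
          _ < M' := by linarith [ht.2]
    have hx0K : x0 ∈ Hcl n ∩ Metric.closedBall (0 : Pt n) M' :=
      ⟨hx0H, by rw [Metric.mem_closedBall, dist_zero_right]; exact hM'x0⟩
    have hxh2 : U x0 ≤ -(2 * η * V x0) := by
      have h9 : 2 * η = -(U x0 / V x0) := by rw [hηdef]; ring
      have h10 : -(2 * η * V x0) = U x0 := by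
        rw [h9]
        field_simp
      rw [h10]
    exact core hγ0 hγ1 hKcomp hKHsub hΩo hΩK hΩH (hUc.mono hKHsub) (hVc.mono hKHsub)
      (hUNc.mono hKHsub) (hVNc.mono hKHsub) (fun x hx => hVpos x (hKHsub hx))
      (fun x hx => hUreg.2.1 x (hΩH hx)) (fun x hx => hVreg.2.1 x (hΩH hx))
      (fun x hx => hUNeq x (hΩH hx)) (fun x hx => hVNeq x (hΩH hx))
      (fun x hx => hUsup x (hΩH hx)) (fun x hx => hVsup x (hΩH hx))
      (fun y _ => hUbn y) (fun y _ => hVbn y) hseg hηpos.le hsplit hx0K hx0 hxh2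

end Frac
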